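/- On U_d, the partial derivative ∂/∂x_{d-1} of the function √(x_1 x_2 ⋯ x_{d+2}) (with x_d, x_{d+1}, x_{d+2} given by Lemma on x_d, x_{d+1}, x_{d+2}) vanishes at a point if and only if x_d = x_{d+1} at that point. Equivalently, the vanishing is equivalent to x_1 x_2 ⋯ x_{d-1} = F[1,d-1] · F[2,d-1]. -/

import Mathlib

/-!
Write `t = x_{d-1}` and `P = x_1 ⋯ x_{d-2}`, so that
`G(t) = P · t · F[1,d-1] / (F[1,d-2] · F[2,d-1])`. Both `F[1,d-1]` and `F[2,d-1]` are affine in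
`t`, with slopes `-F[1,d-3]` and `-F[2,d-3]`, so the numerator of `G'` is
`P · F[1,d-2] · (F[1,d-1] F[2,d-1] - t · W)`, where
`W = F[1,d-3] F[2,d-1] - F[1,d-1] F[2,d-3]`. The sequences `F[1,·]` and `F[2,·]` solve the same
three-term recurrence, so their Casoratian telescopes to a product of the `x_i`, and `W = P`.
The same identity keeps `F[2,·]` positive on `U_d`, so `G` is differentiable there.
-/

/-- The polynomial `F^{(n)}`, with
`F^{(n)}(x_1,...,x_n) = F^{(n-1)}(x_1,...,x_{n-1}) - x_n F^{(n-2)}(x_1,...,x_{n-2})`,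
`F^{(0)} = F^{(-1)} = 1`. -/
def Frec : ℕ → (ℕ → ℝ) → ℝ
  | 0, _ => 1
  | 1, x => 1 - x 1
  | (n + 2), x => Frec (n + 1) x - x (n + 2) * Frec n x

/-- `FF x i j = F[i,j] = F^{(j-i+1)}(x_i, ..., x_j)`, with `F[i,j] = 1` for `j < i`. -/
def FF (x : ℕ → ℝ) (i j : ℕ) : ℝ := Frec (j + 1 - i) (fun k => x (i + k - 1))

open Function Finset

lemma Frec_congr : ∀ (n : ℕ) (x y : ℕ → ℝ),
    (∀ k, 1 ≤ k → k ≤ n → x k = y k) → Frec n x = Frec n y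
  | 0, _, _, _ => rfl
  | 1, x, y, h => by simp [Frec, h 1 le_rfl le_rfl]
  | (n + 2), x, y, h => by
    simp only [Frec]
    rw [Frec_congr (n + 1) x y fun k h1 _ => h k h1 (by omega),
      Frec_congr n x y fun k h1 _ => h k h1 (by omega), h (n + 2) (by omega) le_rfl]

lemma Frec_succ (k : ℕ) (y : ℕ → ℝ) :
    Frec (k + 1) y = Frec k y - y (k + 1) * Frec (k - 1) y := by
  cases k <;> simp [Frec]

@[simp]
lemma FF_of_lt {x : ℕ → ℝ} {i j : ℕ} (h : j < i) : FF x i j = 1 := by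
  rw [FF, Nat.sub_eq_zero_of_le h, Frec]

lemma FF_succ (x : ℕ → ℝ) {i k : ℕ} (hi : 1 ≤ i) (hik : i ≤ k + 1) :
    FF x i (k + 1) = FF x i k - x (k + 1) * FF x i (k - 1) := by
  unfold FF
  rw [show k + 1 + 1 - i = k + 1 - i + 1 by omega, Frec_succ,
    show i + (k + 1 - i + 1) - 1 = k + 1 by omega, show k - 1 + 1 - i = k + 1 - i - 1 by omega]

lemma FF_update_of_lt (x : ℕ → ℝ) {i j n : ℕ} (t : ℝ) (h : j < n) :
    FF (update x n t) i j = FF x i j :=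
  Frec_congr _ _ _ fun _ _ _ => update_of_ne (by omega) _ _

lemma FF_update_succ (x : ℕ → ℝ) {i j : ℕ} (t : ℝ) (hi : 1 ≤ i) (hij : i ≤ j + 1) :
    FF (update x (j + 1) t) i (j + 1) = FF x i j - t * FF x i (j - 1) := by
  rw [FF_succ _ hi hij, update_self, FF_update_of_lt x t (by omega),
    FF_update_of_lt x t (by omega)]

lemma hasDerivAt_FF_update_succ (x : ℕ → ℝ) {i j : ℕ} (hi : 1 ≤ i) (hij : i ≤ j + 1) :
    HasDerivAt (fun t => FF (update x (j + 1) t) i (j + 1)) (-FF x i (j - 1)) (x (j + 1)) := by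
  simp_rw [FF_update_succ x _ hi hij]
  simpa using ((hasDerivAt_id' (x (j + 1))).mul_const (FF x i (j - 1))).const_sub (FF x i j)

lemma prod_Icc_update_succ (x : ℕ → ℝ) (n : ℕ) (t : ℝ) :
    ∏ i ∈ Icc 1 (n + 1), update x (n + 1) t i = (∏ i ∈ Icc 1 n, x i) * t := by
  rw [prod_Icc_succ_top (by omega), update_self]
  congr 1
  exact prod_congr rfl fun i hi => update_of_ne (by have := (mem_Icc.1 hi).2; omega) _ _

lemma FF_casoratian (x : ℕ → ℝ) (k : ℕ) :
    FF x 1 k * FF x 2 (k + 1) - FF x 1 (k + 1) * FF x 2 k = ∏ i ∈ Icc 1 (k + 1), x i := by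
  induction k with
  | zero => simp [FF_succ x le_rfl le_rfl]
  | succ k ih =>
    rw [prod_Icc_succ_top (by omega), ← ih, FF_succ x (k := k + 1) le_rfl (by omega),
      FF_succ x (k := k + 1) (by omega) (by omega), Nat.add_sub_cancel]
    ring

lemma FF_casoratian_two (x : ℕ → ℝ) (k : ℕ) :
    FF x 1 k * FF x 2 (k + 2) - FF x 1 (k + 2) * FF x 2 k = ∏ i ∈ Icc 1 (k + 1), x i := by
  rw [← FF_casoratian, FF_succ x (k := k + 1) le_rfl (by omega),
    FF_succ x (k := k + 1) (by omega) (by omega), Nat.add_sub_cancel]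
  ring

lemma FF_two_pos {x : ℕ → ℝ} {n : ℕ} (hx : ∀ i, 1 ≤ i → i ≤ n → 0 < x i)
    (hF : ∀ i ≤ n, 0 < FF x 1 i) {m : ℕ} (hm : m ≤ n) : 0 < FF x 2 m := by
  induction m with
  | zero => simp
  | succ m ih =>
    have hP : 0 < ∏ i ∈ Icc 1 (m + 1), x i :=
      prod_pos fun i hi => hx i (mem_Icc.1 hi).1 ((mem_Icc.1 hi).2.trans hm)
    have hprod : 0 < FF x 1 m * FF x 2 (m + 1) := by
      linarith [FF_casoratian x m, mul_pos (hF (m + 1) hm) (ih (by omega))]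
    exact pos_of_mul_pos_right hprod (hF m (by omega)).le

/-- For `n = 0` the factor `F[2,1] = 1` is constant, and the identity holds with `c' = 0` because
`F[1,n-1] = F[1,0] = 1` under truncated subtraction. -/
lemma exists_hasDerivAt_FF_two_update_casoratian (x : ℕ → ℝ) (n : ℕ) :
    ∃ c', HasDerivAt (fun t => FF (update x (n + 1) t) 2 (n + 1)) c' (x (n + 1)) ∧
      FF x 1 (n + 1) * c' + FF x 1 (n - 1) * FF x 2 (n + 1) = ∏ i ∈ Icc 1 n, x i := by
  rcases n with _ | k
  · exact ⟨0, by simpa using hasDerivAt_const (x 1) (1 : ℝ), by simp⟩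
  · refine ⟨_, hasDerivAt_FF_update_succ x (by omega) (by omega), ?_⟩
    simp only [Nat.add_sub_cancel]
    linear_combination FF_casoratian_two x k

lemma deriv_mul_mul_div_eq_zero_iff {a c : ℝ → ℝ} {a' c' q b s w : ℝ}
    (ha : HasDerivAt a a' s) (hc : HasDerivAt c c' s) (hq : q ≠ 0) (hb : b ≠ 0)
    (hcs : c s ≠ 0) (hw : a s * c' - a' * c s = w) :
    deriv (fun t => q * t * a t / (b * c t)) s = 0 ↔ a s * c s = s * w := by
  have hf : HasDerivAt (fun t => q * t * a t) (q * 1 * a s + q * s * a') s :=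
    ((hasDerivAt_id' s).const_mul q).mul ha
  have hg : HasDerivAt (fun t => b * c t) (b * c') s := hc.const_mul b
  rw [(hf.fun_div hg (mul_ne_zero hb hcs)).deriv, div_eq_zero_iff,
    or_iff_left (pow_ne_zero 2 (mul_ne_zero hb hcs))]
  constructor
  · intro h
    have h' : q * b * (a s * c s - s * w) = 0 := by linear_combination h + q * b * s * hw
    simpa [hq, hb, sub_eq_zero] using h'
  · intro h
    linear_combination q * b * h - q * b * s * hw

/-- On `U_d`, the function `√(x_1 ⋯ x_{d+2})` — which, after substituting the formulas
`x_d = F[1,d-1]/F[1,d-2]`, `x_{d+1} = x_1⋯x_{d-1}/(F[1,d-2]F[2,d-1])`,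
`x_{d+2} = F[1,d-1]/F[2,d-1]`, equals
`G(x_{d-1}) = (x_1 ⋯ x_{d-1} · F[1,d-1]) / (F[1,d-2] · F[2,d-1])` viewed as a function
of the last coordinate `x_{d-1}` — has vanishing partial derivative `∂/∂x_{d-1}` at a
point of `U_d` if and only if `x_d = x_{d+1}` there; equivalently, if and only if
`x_1 x_2 ⋯ x_{d-1} = F[1,d-1] · F[2,d-1]`. -/
theorem partial_derivative_vanishes_iff (d : ℕ) (hd : 2 ≤ d) (x : ℕ → ℝ)
    (hpos : ∀ i, 1 ≤ i → i ≤ d - 1 → 0 < x i)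
    (hFpos : ∀ i, 1 ≤ i → i ≤ d - 1 → 0 < FF x 1 i)
    (G : ℝ → ℝ)
    (hG : ∀ s : ℝ, G s =
      (∏ k ∈ Finset.Icc 1 (d - 1), Function.update x (d - 1) s k) *
        FF (Function.update x (d - 1) s) 1 (d - 1) /
        (FF (Function.update x (d - 1) s) 1 (d - 2) *
          FF (Function.update x (d - 1) s) 2 (d - 1))) :
    (deriv G (x (d - 1)) = 0 ↔
      FF x 1 (d - 1) / FF x 1 (d - 2) =
        (∏ k ∈ Finset.Icc 1 (d - 1), x k) / (FF x 1 (d - 2) * FF x 2 (d - 1))) ∧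
    (deriv G (x (d - 1)) = 0 ↔
      (∏ k ∈ Finset.Icc 1 (d - 1), x k) = FF x 1 (d - 1) * FF x 2 (d - 1)) := by
  obtain ⟨n, rfl⟩ : ∃ n, d = n + 2 := ⟨d - 2, by omega⟩
  simp only [show n + 2 - 1 = n + 1 by omega, show n + 2 - 2 = n by omega] at *
  have hF₁ : ∀ i ≤ n + 1, 0 < FF x 1 i := fun i hi => by
    rcases i.eq_zero_or_pos with rfl | h
    exacts [by simp, hFpos i h hi]
  have hF₂ : 0 < FF x 2 (n + 1) := FF_two_pos hpos hF₁ le_rfl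
  have hP : 0 < ∏ i ∈ Icc 1 n, x i := prod_pos fun i hi => hpos i (mem_Icc.1 hi).1 (by grind)
  have hGf : G = fun t => (∏ i ∈ Icc 1 n, x i) * t * FF (update x (n + 1) t) 1 (n + 1) /
      (FF x 1 n * FF (update x (n + 1) t) 2 (n + 1)) := by
    funext t
    rw [hG, prod_Icc_update_succ, FF_update_of_lt x t n.lt_succ_self]
  obtain ⟨c', hc, hW⟩ := exists_hasDerivAt_FF_two_update_casoratian x n
  have key := deriv_mul_mul_div_eq_zero_iff (hasDerivAt_FF_update_succ x le_rfl (by omega)) hc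
    hP.ne' (hF₁ n (by omega)).ne' (by simpa using hF₂.ne')
    (w := ∏ i ∈ Icc 1 n, x i) (by simp only [update_eq_self]; linear_combination hW)
  simp only [update_eq_self, ← hGf] at key
  have hcrit : deriv G (x (n + 1)) = 0 ↔
      ∏ i ∈ Icc 1 (n + 1), x i = FF x 1 (n + 1) * FF x 2 (n + 1) := by
    rw [key, prod_Icc_succ_top (by omega), mul_comm _ (x (n + 1)), eq_comm]
  refine ⟨?_, hcrit⟩
  rw [hcrit, mul_comm (FF x 1 n), ← div_div, div_left_inj' (hF₁ n (by omega)).ne',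
    eq_div_iff hF₂.ne', eq_comm]
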